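/- If w(h₂) = w(h₁) + ε for some ε ∈ [0,∞) and some h₁, h₂ ∈ [0,m], then 0 ≤ x_+(h₂) − x_+(h₁) ≤ ε and 0 ≤ x_−(h₁) − x_−(h₂) ≤ ε. -/

import Mathlib

/-!
`x₊` is nondecreasing and `x₋` nonincreasing in `h`. Both are finite for `h < m`, since
`G x → E X⁺ = m` as `x → ∞` and `G x → E X⁻ = m` as `x → -∞` (dominated convergence; the two
limits agree because `E X = 0`). If `h₁ ≠ h₂`, the smaller one is `< m`, so `w(h₁)` and `w(h₂)` are
finite and `ε = w(h₂) - w(h₁) = (x₊(h₂) - x₊(h₁)) + (x₋(h₁) - x₋(h₂))` is a sum of two terms of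
the same sign; hence each lies in `[0, ε]`.
-/

open MeasureTheory ProbabilityTheory Set Filter Function
open scoped ENNReal NNReal Topology

noncomputable section

namespace PinelisTtest

variable {Ω : Type*} [MeasurableSpace Ω]

/-- The function `G` from the paper: `G x = E[X 1{X ∈ (0,x]}]` for `x ≥ 0`,
`G x = E[(-X) 1{X ∈ [x,0)}]` for `x < 0`. -/
def G (P : Measure Ω) (X : Ω → ℝ) (x : ℝ) : ℝ :=
  if 0 ≤ x then ∫ ω, (if X ω ∈ Set.Ioc (0:ℝ) x then X ω else 0) ∂P
  else ∫ ω, (if X ω ∈ Set.Ico x (0:ℝ) then -(X ω) else 0) ∂P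

/-- `m := (1/2) E|X|`. -/
def mHalf (P : Measure Ω) (X : Ω → ℝ) : ℝ := (1/2) * ∫ ω, |X ω| ∂P

/-- `G` extended to `[-∞,∞]`, with `G(±∞) = m`. -/
def Gbar (P : Measure Ω) (X : Ω → ℝ) (x : EReal) : ℝ :=
  if x = ⊤ ∨ x = ⊥ then mHalf P X else G P X x.toReal

/-- `x_+(h) := inf {x ∈ [0,∞] : G(x) ≥ h}`. -/
def xPlus (P : Measure Ω) (X : Ω → ℝ) (h : ℝ) : EReal :=
  sInf {x : EReal | 0 ≤ x ∧ h ≤ Gbar P X x}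

/-- `x_-(h) := sup {x ∈ [-∞,0] : G(x) ≥ h}`. -/
def xMinus (P : Measure Ω) (X : Ω → ℝ) (h : ℝ) : EReal :=
  sSup {x : EReal | x ≤ 0 ∧ h ≤ Gbar P X x}

/-- `w(h) := x_+(h) - x_-(h)`. -/
def wFun (P : Measure Ω) (X : Ω → ℝ) (h : ℝ) : EReal := xPlus P X h - xMinus P X h

/-- `V := {w(h) : h ∈ (0,m]}`. -/
def V (P : Measure Ω) (X : Ω → ℝ) : Set EReal := wFun P X '' Set.Ioc 0 (mHalf P X)

/-- `h_+(x,u) := G(x-) + u (G(x) - G(x-))`. -/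
def hPlus (P : Measure Ω) (X : Ω → ℝ) (x u : ℝ) : ℝ :=
  leftLim (G P X) x + u * (G P X x - leftLim (G P X) x)

/-- `h_-(x,u) := G(x+) + u (G(x) - G(x+))`. -/
def hMinus (P : Measure Ω) (X : Ω → ℝ) (x u : ℝ) : ℝ :=
  rightLim (G P X) x + u * (G P X x - rightLim (G P X) x)

/-- `H(x,u)`. -/
def H (P : Measure Ω) (X : Ω → ℝ) (x u : ℝ) : ℝ :=
  if 0 ≤ x then hPlus P X x u else hMinus P X x u

/-- The reciprocating function `r(x,u)` (real-valued; the extended value is converted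
by `EReal.toReal`, which only matters off the almost-sure good set). -/
def recip (P : Measure Ω) (X : Ω → ℝ) (x u : ℝ) : ℝ :=
  if 0 ≤ x then (xMinus P X (H P X x u)).toReal else (xPlus P X (H P X x u)).toReal

/-- `U_X(ω) := U(ω)` if `P(X = X(ω)) ≠ 0`, and `:= 1` otherwise. -/
def UX (P : Measure Ω) (X U : Ω → ℝ) (ω : Ω) : ℝ :=
  if P {ω' | X ω' = X ω} ≠ 0 then U ω else 1

/-- `W := |X - r(X, U_X)|`. -/
def W (P : Measure Ω) (X U : Ω → ℝ) (ω : Ω) : ℝ :=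
  |X ω - recip P X (X ω) (UX P X U ω)|

/-- `Y := |X ⬝ r(X, U_X)|`. -/
def Yf (P : Measure Ω) (X U : Ω → ℝ) (ω : Ω) : ℝ :=
  |X ω * recip P X (X ω) (UX P X U ω)|

/-- `U` is uniformly distributed on `[0,1]`. -/
def IsUniform01 (P : Measure Ω) (U : Ω → ℝ) : Prop :=
  P.map U = volume.restrict (Set.Icc (0:ℝ) 1)

/-- `M_+`. -/
def Mplus (P : Measure Ω) (X : Ω → ℝ) : Set ℝ :=
  {x | 0 < x ∧ ∀ y < x, 0 < P {ω | X ω ∈ Set.Ioc y x}}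

/-- `N_+`. -/
def Nplus (P : Measure Ω) (X : Ω → ℝ) : Set ℝ :=
  {x | 0 < x ∧ P {ω | X ω = x} = 0}

/-- `L_+`. -/
def Lplus (P : Measure Ω) (X : Ω → ℝ) : Set ℝ :=
  {x | 0 < x ∧ ∃ y, 0 ≤ y ∧ y < x ∧ P {ω | X ω ∈ Set.Ioo y x} = 0}

/-- `M_-`. -/
def Mminus (P : Measure Ω) (X : Ω → ℝ) : Set ℝ :=
  {x | x < 0 ∧ ∀ y, x < y → 0 < P {ω | X ω ∈ Set.Ico x y}}

/-- `N_-`. -/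
def Nminus (P : Measure Ω) (X : Ω → ℝ) : Set ℝ :=
  {x | x < 0 ∧ P {ω | X ω = x} = 0}

/-- `L_-`. -/
def Lminus (P : Measure Ω) (X : Ω → ℝ) : Set ℝ :=
  {x | x < 0 ∧ ∃ y, x < y ∧ y ≤ 0 ∧ P {ω | X ω ∈ Set.Ioo x y} = 0}

/-- `𝒢_+`. -/
def Gplus (P : Measure Ω) (X : Ω → ℝ) : Set (ℝ × ℝ) :=
  {p | p.1 ∈ Mplus P X ∧ 0 ≤ p.2 ∧ p.2 ≤ 1 ∧
    (p.1 ∈ Nplus P X → p.2 = 1) ∧ (p.1 ∈ Lplus P X → 0 < p.2) ∧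
    (P {ω | p.1 < X ω} = 0 → p.1 ∉ Nplus P X ∧ p.2 < 1)}

/-- `𝒢_-`. -/
def Gminus (P : Measure Ω) (X : Ω → ℝ) : Set (ℝ × ℝ) :=
  {p | p.1 ∈ Mminus P X ∧ 0 ≤ p.2 ∧ p.2 ≤ 1 ∧
    (p.1 ∈ Nminus P X → p.2 = 1) ∧ (p.1 ∈ Lminus P X → 0 < p.2) ∧
    (P {ω | X ω < p.1} = 0 → p.1 ∉ Nminus P X ∧ p.2 < 1)}

/-- `𝒢 := 𝒢_+ ∪ 𝒢_-`. -/
def Gset (P : Measure Ω) (X : Ω → ℝ) : Set (ℝ × ℝ) := Gplus P X ∪ Gminus P X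

section
variable {P : Measure Ω} {X : Ω → ℝ} {h : ℝ}

lemma G_of_nonneg {x : ℝ} (hx : 0 ≤ x) : G P X x = ∫ ω, (Ioc 0 x).indicator id (X ω) ∂P := by
  simp [G, hx, indicator_apply]

lemma G_of_neg {x : ℝ} (hx : x < 0) : G P X x = G P (-X) (-x) := by
  rw [G, if_neg hx.not_ge, G_of_nonneg (neg_nonneg.2 hx.le)]
  congr 1 with ω
  simp [indicator_apply, and_comm]

lemma tendsto_G_atTop (hX : Integrable X P) :
    Tendsto (G P X) atTop (𝓝 (∫ ω, (X ω)⁺ ∂P)) := by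
  refine Tendsto.congr' ((eventually_ge_atTop 0).mono fun x hx => (G_of_nonneg hx).symm)
    (tendsto_integral_filter_of_dominated_convergence (fun ω => ‖X ω‖) ?_ ?_ hX.norm ?_)
  · exact .of_forall fun x => ((measurable_id.indicator measurableSet_Ioc).comp_aemeasurable
      hX.aemeasurable).aestronglyMeasurable
  · exact .of_forall fun x => .of_forall fun ω => norm_indicator_le_norm_self _ _
  · refine .of_forall fun ω => tendsto_const_nhds.congr' ?_
    filter_upwards [eventually_ge_atTop (X ω)] with x hx
    rcases le_or_gt (X ω) 0 with hω | hω
    · simp [posPart_eq_zero.2 hω, hω.not_gt]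
    · simp [posPart_eq_self.2 hω.le, hω, hx]

lemma tendsto_G_atBot (hX : Integrable X P) :
    Tendsto (G P X) atBot (𝓝 (∫ ω, (X ω)⁻ ∂P)) := by
  have h := (tendsto_G_atTop hX.neg).comp tendsto_neg_atBot_atTop
  simp only [Pi.neg_apply, posPart_neg] at h
  refine h.congr' ((eventually_lt_atBot 0).mono fun x hx => ?_)
  simp [G_of_neg hx]

lemma integral_posPart_eq_mHalf (hX : Integrable X P) (hmean : ∫ ω, X ω ∂P = 0) :
    ∫ ω, (X ω)⁺ ∂P = mHalf P X := by
  rw [mHalf, integral_abs_eq_two_mul_integral_posPart_sub_integral hX, hmean]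
  ring

lemma integral_negPart_eq_mHalf (hX : Integrable X P) (hmean : ∫ ω, X ω ∂P = 0) :
    ∫ ω, (X ω)⁻ ∂P = mHalf P X := by
  rw [mHalf, integral_abs_eq_two_mul_integral_negPart_add_integral hX, hmean]
  ring

lemma Gbar_coe (x : ℝ) : Gbar P X x = G P X x := by
  simp [Gbar]

lemma xPlus_mono : Monotone (xPlus P X) :=
  fun _ _ hh => sInf_le_sInf fun _ hx => ⟨hx.1, hh.trans hx.2⟩

lemma xMinus_antitone : Antitone (xMinus P X) :=
  fun _ _ hh => sSup_le_sSup fun _ hx => ⟨hx.1, hh.trans hx.2⟩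

lemma xPlus_ne_bot : xPlus P X h ≠ ⊥ :=
  (EReal.bot_lt_zero.trans_le (le_sInf fun _ hx => hx.1)).ne'

lemma xMinus_ne_top : xMinus P X h ≠ ⊤ :=
  ((sSup_le fun _ hx => hx.1).trans_lt EReal.zero_lt_top).ne

lemma xPlus_ne_top_of_lt (hX : Integrable X P) (hh : h < ∫ ω, (X ω)⁺ ∂P) :
    xPlus P X h ≠ ⊤ := by
  obtain ⟨x, hGx, hx⟩ :=
    (((tendsto_G_atTop hX).eventually (eventually_ge_nhds hh)).and (eventually_ge_atTop 0)).exists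
  exact ne_top_of_le_ne_top (EReal.coe_ne_top x)
    (sInf_le ⟨EReal.coe_nonneg.2 hx, by rwa [Gbar_coe]⟩)

lemma xMinus_ne_bot_of_lt (hX : Integrable X P) (hh : h < ∫ ω, (X ω)⁻ ∂P) :
    xMinus P X h ≠ ⊥ := by
  obtain ⟨x, hGx, hx⟩ :=
    (((tendsto_G_atBot hX).eventually (eventually_ge_nhds hh)).and (eventually_le_atBot 0)).exists
  exact ne_bot_of_le_ne_bot (EReal.coe_ne_bot x)
    (le_sSup ⟨EReal.coe_nonpos.2 hx, by rwa [Gbar_coe]⟩)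

lemma wFun_ne_top_iff : wFun P X h ≠ ⊤ ↔ xPlus P X h ≠ ⊤ ∧ xMinus P X h ≠ ⊥ := by
  rw [wFun, sub_eq_add_neg, EReal.add_ne_top_iff_ne_top₂ xPlus_ne_bot
    (by simpa using xMinus_ne_top), Ne, Ne, EReal.neg_eq_top_iff]

lemma wFun_ne_top_of_lt_mHalf (hX : Integrable X P) (hmean : ∫ ω, X ω ∂P = 0)
    (hh : h < mHalf P X) : wFun P X h ≠ ⊤ :=
  wFun_ne_top_iff.2
    ⟨xPlus_ne_top_of_lt hX (integral_posPart_eq_mHalf hX hmean ▸ hh),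
      xMinus_ne_bot_of_lt hX (integral_negPart_eq_mHalf hX hmean ▸ hh)⟩

end

theorem w_eps_general
    (P : Measure Ω) (X : Ω → ℝ) (hXint : Integrable X P) (hXmean : ∫ ω, X ω ∂P = 0)
    (ε : ℝ) (hε : 0 ≤ ε) (h₁ h₂ : ℝ)
    (hh₁ : h₁ ∈ Set.Icc (0:ℝ) (mHalf P X)) (hh₂ : h₂ ∈ Set.Icc (0:ℝ) (mHalf P X))
    (hw : wFun P X h₂ = wFun P X h₁ + (ε : EReal)) :
    (xPlus P X h₁ ≤ xPlus P X h₂ ∧ xPlus P X h₂ ≤ xPlus P X h₁ + (ε : EReal)) ∧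
    (xMinus P X h₂ ≤ xMinus P X h₁ ∧ xMinus P X h₁ ≤ xMinus P X h₂ + (ε : EReal)) := by
  rcases eq_or_ne h₁ h₂ with rfl | hne
  · have hle (a : EReal) : a ≤ a + ε := le_add_of_nonneg_right (EReal.coe_nonneg.2 hε)
    exact ⟨⟨le_rfl, hle _⟩, le_rfl, hle _⟩
  have hw_fin : wFun P X h₂ ≠ ⊤ ↔ wFun P X h₁ ≠ ⊤ :=
    hw ▸ EReal.add_ne_top_iff_ne_top_left (EReal.coe_ne_bot ε) (EReal.coe_ne_top ε)
  have hfin : wFun P X h₁ ≠ ⊤ ∧ wFun P X h₂ ≠ ⊤ := by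
    rcases hne.lt_or_gt with hlt | hlt
    · have := wFun_ne_top_of_lt_mHalf hXint hXmean (hlt.trans_le hh₂.2)
      exact ⟨this, hw_fin.2 this⟩
    · have := wFun_ne_top_of_lt_mHalf hXint hXmean (hlt.trans_le hh₁.2)
      exact ⟨hw_fin.1 this, this⟩
  have hmono : (xPlus P X h₁ ≤ xPlus P X h₂ ∧ xMinus P X h₂ ≤ xMinus P X h₁) ∨
      (xPlus P X h₂ ≤ xPlus P X h₁ ∧ xMinus P X h₁ ≤ xMinus P X h₂) :=
    (le_total h₁ h₂).imp (fun h => ⟨xPlus_mono h, xMinus_antitone h⟩)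
      (fun h => ⟨xPlus_mono h, xMinus_antitone h⟩)
  obtain ⟨⟨ha₁, hb₁⟩, ha₂, hb₂⟩ := And.imp wFun_ne_top_iff.1 wFun_ne_top_iff.1 hfin
  rw [wFun, wFun] at hw
  lift xPlus P X h₁ to ℝ using ⟨ha₁, xPlus_ne_bot⟩ with a₁
  lift xPlus P X h₂ to ℝ using ⟨ha₂, xPlus_ne_bot⟩ with a₂
  lift xMinus P X h₁ to ℝ using ⟨xMinus_ne_top, hb₁⟩ with b₁
  lift xMinus P X h₂ to ℝ using ⟨xMinus_ne_top, hb₂⟩ with b₂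
  norm_cast at hw hmono ⊢
  rcases hmono with ⟨ha, hb⟩ | ⟨ha, hb⟩ <;> refine ⟨⟨?_, ?_⟩, ?_, ?_⟩ <;> linarith

/-- Lemma `w,eps` of the paper. The conclusions
`0 ≤ x_+(h₂) - x_+(h₁) ≤ ε` and `0 ≤ x_-(h₁) - x_-(h₂) ≤ ε` are stated in the
subtraction-free form `x_+(h₁) ≤ x_+(h₂) ≤ x_+(h₁) + ε`, etc., which is the correct
rendering in the extended real line. -/
theorem w_eps
    (P : Measure Ω) [IsProbabilityMeasure P] (X : Ω → ℝ)
    (hXm : Measurable X) (hXint : Integrable X P)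
    (hXmean : ∫ ω, X ω ∂P = 0) (hX0 : P {ω | X ω = 0} ≠ 1)
    (ε : ℝ) (hε : 0 ≤ ε) (h₁ h₂ : ℝ)
    (hh₁ : h₁ ∈ Set.Icc (0:ℝ) (mHalf P X)) (hh₂ : h₂ ∈ Set.Icc (0:ℝ) (mHalf P X))
    (hw : wFun P X h₂ = wFun P X h₁ + (ε : EReal)) :
    (xPlus P X h₁ ≤ xPlus P X h₂ ∧ xPlus P X h₂ ≤ xPlus P X h₁ + (ε : EReal)) ∧
    (xMinus P X h₂ ≤ xMinus P X h₁ ∧ xMinus P X h₁ ≤ xMinus P X h₂ + (ε : EReal)) :=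
  w_eps_general P X hXint hXmean ε hε h₁ h₂ hh₁ hh₂ hw

end PinelisTtest
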